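/- arXiv:2112.02539 — 2 statements merged into one kernel-verified Lean document; each statement's English description precedes it below -/
import Mathlib

section
/- If 𝔐 is a free graded monoid with 𝔐_1 a singleton and an injective degree-2 suspension map S whose image is exactly the set of primitive elements of degree ≥ 2, then the number of elements of 𝔐 of degree n equals the n-th Motzkin number for every n. -/
/-!
Every element of positive degree factors uniquely as a primitive times an element, and the
primitives are the degree-one element `u` together with the injective image of `S`. So an element
of degree `n + 1` is uniquely either `u * y` with `deg y = n`, or `S a * b` with
`deg a + deg b = n - 1`: this is the Motzkin recurrence for the number of elements of each degree.
-/

/-- An element of positive degree of a graded monoid is primitive if it is not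
the product of two elements of positive degree. -/
def GradedPrimitive {M : Type*} [Monoid M] (deg : M → ℕ) (x : M) : Prop :=
  0 < deg x ∧ ¬ ∃ a b : M, 0 < deg a ∧ 0 < deg b ∧ x = a * b

def MotzkinDecomposition (T : ℕ → Type*) : Type _ :=
  ∀ n, T n ⊕ (Σ k : Fin n, T k × T (n - 1 - k)) ≃ T (n + 1)

namespace MotzkinDecomposition

variable {T : ℕ → Type*}

theorem finite [Finite (T 0)] (e : MotzkinDecomposition T) (n : ℕ) : Finite (T n) := by
  induction n using Nat.strong_induction_on with
  | _ n ih =>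
    cases n with
    | zero => infer_instance
    | succ n =>
      have := ih n n.lt_succ_self
      have (k : Fin n) : Finite (T k) := ih k (by omega)
      have (k : Fin n) : Finite (T (n - 1 - k)) := ih _ (by omega)
      exact Finite.of_equiv _ (e n)

theorem card_eq [Unique (T 0)] (e : MotzkinDecomposition T) (f : ℕ → ℕ) (h0 : f 0 = 1)
    (hrec : ∀ n, f (n + 1) = f n + ∑ k ∈ Finset.range n, f k * f (n - 1 - k)) (n : ℕ) :
    Nat.card (T n) = f n := by
  have := e.finite
  induction n using Nat.strong_induction_on with
  | _ n ih =>
    cases n with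
    | zero => rw [Nat.card_unique, h0]
    | succ n =>
      rw [← Nat.card_congr (e n), Nat.card_sum, Nat.card_sigma, hrec, ih n n.lt_succ_self,
        ← Fin.sum_univ_eq_sum_range]
      congr 1
      refine Finset.sum_congr rfl fun k _ => ?_
      rw [Nat.card_prod, ih k (by omega), ih (n - 1 - k) (by omega)]

end MotzkinDecomposition

theorem GradedPrimitive.of_deg_eq_one {M : Type*} [Monoid M] {deg : M → ℕ}
    (hmul : ∀ a b : M, deg (a * b) = deg a + deg b) {x : M} (hx : deg x = 1) :
    GradedPrimitive deg x :=
  ⟨by omega, fun ⟨a, b, ha, hb, hab⟩ => by rw [hab, hmul] at hx; omega⟩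

structure IsFreeGradedMonoid {M : Type*} [Monoid M] (deg : M → ℕ) : Prop where
  deg_one : deg 1 = 0
  deg_mul : ∀ a b : M, deg (a * b) = deg a + deg b
  existsUnique_factorization :
    ∀ x : M, ∃! L : List M, (∀ y ∈ L, GradedPrimitive deg y) ∧ L.prod = x

abbrev GradedPiece {M : Type*} (deg : M → ℕ) (n : ℕ) : Type _ := {x : M // deg x = n}

namespace IsFreeGradedMonoid

variable {M : Type*} [Monoid M] {deg : M → ℕ}

theorem eq_one_of_deg_eq_zero (hM : IsFreeGradedMonoid deg) {x : M} (hx : deg x = 0) :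
    x = 1 := by
  obtain ⟨L, ⟨hprim, rfl⟩, -⟩ := hM.existsUnique_factorization x
  cases L with
  | nil => rfl
  | cons p L =>
    have := (hprim p List.mem_cons_self).1
    rw [List.prod_cons, hM.deg_mul] at hx
    omega

abbrev uniqueGradedPieceZero (hM : IsFreeGradedMonoid deg) : Unique (GradedPiece deg 0) where
  default := ⟨1, hM.deg_one⟩
  uniq x := Subtype.ext (hM.eq_one_of_deg_eq_zero x.2)

theorem exists_primitive_mul_eq (hM : IsFreeGradedMonoid deg) {x : M} (hx : deg x ≠ 0) :
    ∃ p y, GradedPrimitive deg p ∧ p * y = x := by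
  obtain ⟨L, ⟨hprim, rfl⟩, -⟩ := hM.existsUnique_factorization x
  cases L with
  | nil => exact absurd hM.deg_one hx
  | cons p L => exact ⟨p, L.prod, hprim p List.mem_cons_self, List.prod_cons⟩

theorem primitive_mul_inj (hM : IsFreeGradedMonoid deg) {p p' y y' : M}
    (hp : GradedPrimitive deg p) (hp' : GradedPrimitive deg p') (h : p * y = p' * y') :
    p = p' ∧ y = y' := by
  obtain ⟨L, ⟨hL, rfl⟩, -⟩ := hM.existsUnique_factorization y
  obtain ⟨L', ⟨hL', rfl⟩, -⟩ := hM.existsUnique_factorization y'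
  have hcons : p :: L = p' :: L' := (hM.existsUnique_factorization (p * L.prod)).unique
    ⟨List.forall_mem_cons.2 ⟨hp, hL⟩, List.prod_cons⟩
    ⟨List.forall_mem_cons.2 ⟨hp', hL'⟩, by rw [List.prod_cons, h]⟩
  obtain ⟨rfl, rfl⟩ := List.cons_eq_cons.1 hcons
  exact ⟨rfl, rfl⟩

section Motzkin

variable {u : M} {S : M → M}

theorem exists_eq_mul_or_exists_eq_mul (hM : IsFreeGradedMonoid deg)
    (hu : ∀ x, deg x = 1 → x = u)
    (hS : {x | GradedPrimitive deg x ∧ 2 ≤ deg x} ⊆ Set.range S)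
    {x : M} (hx : deg x ≠ 0) : (∃ y, u * y = x) ∨ ∃ a b, S a * b = x := by
  obtain ⟨p, y, hp, rfl⟩ := hM.exists_primitive_mul_eq hx
  by_cases hp1 : deg p = 1
  · exact .inl ⟨y, by rw [hu p hp1]⟩
  · obtain ⟨a, rfl⟩ := hS ⟨hp, by have := hp.1; omega⟩
    exact .inr ⟨a, y, rfl⟩

variable (u S) in
def motzkinMap (hmul : ∀ a b : M, deg (a * b) = deg a + deg b) (hu : deg u = 1)
    (hS : ∀ x, deg (S x) = deg x + 2) (n : ℕ) :
    GradedPiece deg n ⊕ (Σ k : Fin n, GradedPiece deg k × GradedPiece deg (n - 1 - k)) →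
      GradedPiece deg (n + 1)
  | .inl y => ⟨u * y, by rw [hmul, hu, y.2, add_comm]⟩
  | .inr ⟨k, a, b⟩ => ⟨S a * b, by rw [hmul, hS, a.2, b.2]; have := k.isLt; omega⟩

theorem motzkinMap_injective (hM : IsFreeGradedMonoid deg) (hu : deg u = 1)
    (hS : ∀ x, deg (S x) = deg x + 2) (hSinj : Function.Injective S)
    (hSprim : ∀ a, GradedPrimitive deg (S a)) (n : ℕ) :
    Function.Injective (motzkinMap u S hM.deg_mul hu hS n) := by
  have hu' := GradedPrimitive.of_deg_eq_one hM.deg_mul hu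
  have hne (a : M) : u ≠ S a := fun h => by have := congrArg deg h; rw [hS] at this; omega
  rintro (⟨y, _⟩ | ⟨k, ⟨a, ha⟩, ⟨b, _⟩⟩) (⟨y', _⟩ | ⟨k', ⟨a', ha'⟩, ⟨b', _⟩⟩) h <;>
    simp only [motzkinMap, Subtype.mk.injEq] at h
  · obtain ⟨-, rfl⟩ := hM.primitive_mul_inj hu' hu' h
    rfl
  · exact absurd (hM.primitive_mul_inj hu' (hSprim a') h).1 (hne a')
  · exact absurd (hM.primitive_mul_inj (hSprim a) hu' h).1.symm (hne a)
  · obtain ⟨haa, rfl⟩ := hM.primitive_mul_inj (hSprim a) (hSprim a') h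
    obtain rfl := hSinj haa
    obtain rfl : k = k' := Fin.ext (ha.symm.trans ha')
    rfl

theorem motzkinMap_surjective (hM : IsFreeGradedMonoid deg) (hu : deg u = 1)
    (huniq : ∀ x, deg x = 1 → x = u) (hS : ∀ x, deg (S x) = deg x + 2)
    (hSrange : {x | GradedPrimitive deg x ∧ 2 ≤ deg x} ⊆ Set.range S) (n : ℕ) :
    Function.Surjective (motzkinMap u S hM.deg_mul hu hS n) := by
  rintro ⟨x, hx⟩
  rcases hM.exists_eq_mul_or_exists_eq_mul huniq hSrange (x := x) (by omega) with
    ⟨y, rfl⟩ | ⟨a, b, rfl⟩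
  · rw [hM.deg_mul, hu] at hx
    exact ⟨.inl ⟨y, by omega⟩, rfl⟩
  · rw [hM.deg_mul, hS] at hx
    have hb : deg b = n - 1 - deg a := by omega
    exact ⟨.inr ⟨⟨deg a, by omega⟩, ⟨a, rfl⟩, ⟨b, hb⟩⟩, rfl⟩

noncomputable def motzkinDecomposition (hM : IsFreeGradedMonoid deg) (hu : deg u = 1)
    (huniq : ∀ x, deg x = 1 → x = u) (hS : ∀ x, deg (S x) = deg x + 2)
    (hSinj : Function.Injective S)
    (hSrange : Set.range S = {x | GradedPrimitive deg x ∧ 2 ≤ deg x}) :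
    MotzkinDecomposition (GradedPiece deg) := fun n =>
  Equiv.ofBijective _
    ⟨hM.motzkinMap_injective hu hS hSinj (fun a => (hSrange.le ⟨a, rfl⟩).1) n,
      hM.motzkinMap_surjective hu huniq hS hSrange.ge n⟩

end Motzkin

end IsFreeGradedMonoid

theorem card_of_free_graded_monoid_general {M : Type*} [Monoid M] (deg : M → ℕ)
    (hdeg1 : deg 1 = 0) (hdegmul : ∀ a b : M, deg (a * b) = deg a + deg b)
    (hfree : ∀ x : M, ∃! L : List M, (∀ y ∈ L, GradedPrimitive deg y) ∧ L.prod = x)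
    (hone : ∃! x : M, deg x = 1)
    (S : M → M) (hS : ∀ x, deg (S x) = deg x + 2)
    (hSinj : Function.Injective S)
    (hSrange : Set.range S = {x : M | GradedPrimitive deg x ∧ 2 ≤ deg x})
    (Mnum : ℕ → ℕ) (h0 : Mnum 0 = 1)
    (hrec : ∀ n, Mnum (n + 1) =
      Mnum n + ∑ k ∈ Finset.range n, Mnum k * Mnum (n - 1 - k)) :
    ∀ n, Nat.card {x : M // deg x = n} = Mnum n := by
  obtain ⟨u, hu, huniq⟩ := hone
  have hM : IsFreeGradedMonoid deg := ⟨hdeg1, hdegmul, hfree⟩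
  have := hM.uniqueGradedPieceZero
  exact (hM.motzkinDecomposition hu huniq hS hSinj hSrange).card_eq Mnum h0 hrec

/-- if `M` is a free graded monoid (unique factorization into
primitives) whose degree-1 part is a singleton, with an injective degree-2
suspension map `S` whose image is exactly the set of primitive elements of
degree at least 2, then the number of elements of `M` of degree `n` is the
`n`-th Motzkin number. -/
theorem card_of_free_graded_monoid {M : Type*} [Monoid M] (deg : M → ℕ)
    (hdeg1 : deg 1 = 0) (hdegmul : ∀ a b : M, deg (a * b) = deg a + deg b)
    (hfree : ∀ x : M, ∃! L : List M, (∀ y ∈ L, GradedPrimitive deg y) ∧ L.prod = x)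
    (hone : ∃! x : M, deg x = 1)
    (S : M → M) (hS : ∀ x, deg (S x) = deg x + 2)
    (hSinj : Function.Injective S)
    (hSrange : Set.range S = {x : M | GradedPrimitive deg x ∧ 2 ≤ deg x})
    (Mnum : ℕ → ℕ) (h0 : Mnum 0 = 1) (h1 : Mnum 1 = 1)
    (hrec : ∀ n, Mnum (n + 1) =
      Mnum n + ∑ k ∈ Finset.range n, Mnum k * Mnum (n - 1 - k)) :
    ∀ n, Nat.card {x : M // deg x = n} = Mnum n :=
  card_of_free_graded_monoid_general deg hdeg1 hdegmul hfree hone S hS hSinj hSrange Mnum h0 hrec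
end

section
/- For a multisegment M of weight (n+1,...,n+1) over [1,n] and a multisegment N of weight (q+1,...,q+1) over [1,q], the concatenation M * N is a well-defined multisegment of weight (n+q+1,...,n+q+1) over [1,n+q]. -/
/-!
Gluing pairs the padded starts of `M` with the padded ends of `N`, but the weights do not depend on
the pairing: at a point `k ≤ p` a glued segment `[a, b + p]` contains `k` exactly when `a ≤ k`, and
at `k > p` exactly when `k ≤ b + p`. So for `k ≤ p` the glued segments count like the segments of
`M` ending at `p` plus the `q` padding copies of `[1,p]`, and together with the segments of `M`
ending before `p` they give `wt M k + q = p + q + 1`. For `k > p` the same count runs on the side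
of `N`, where the `p` padding copies of `[1,q]` supply the extra `p`.
-/
/-- A segment is an interval `[i,j]` of positive integers, encoded as the
pair `(i, j)` with `1 ≤ i ≤ j`.  A multisegment is a multiset of segments. -/
abbrev Seg := ℕ × ℕ

/-- The weight of the multisegment `M` at `k`: the number of segments of `M`
containing `k`. -/
def wt (M : Multiset Seg) (k : ℕ) : ℕ :=
  (M.filter (fun s => s.1 ≤ k ∧ k ≤ s.2)).card

/-- `M` belongs to `R_n`: all its members are segments contained in `[1,n]`,
and its weight is `(n+1, …, n+1)`. -/
def InR (n : ℕ) (M : Multiset Seg) : Prop :=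
  (∀ s ∈ M, 1 ≤ s.1 ∧ s.1 ≤ s.2 ∧ s.2 ≤ n) ∧
  ∀ k, 1 ≤ k → k ≤ n → wt M k = n + 1

/-- Concatenation of multisegments `M ∈ R_p` and `N ∈ R_q`: keep the segments
of `M` ending before `p` and those of `N` (shifted by `p`) starting after `1`,
and glue the segments of `M` ending at `p` (padded with `q` copies of `[1,p]`)
to the segments of `N` starting at `1` (padded with `p` copies of `[1,q]`),
matching shortest with shortest. -/
def concatMS (p q : ℕ) (M N : Multiset Seg) : Multiset Seg :=
  if p = 0 then N
  else if q = 0 then M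
  else
    M.filter (fun s => s.2 < p)
      + (N.filter (fun s => 1 < s.1)).map (fun s => (s.1 + p, s.2 + p))
      + ↑(List.map (fun x : ℕ × ℕ => (x.1, x.2 + p))
          (List.zip
            ((((M.filter (fun s : Seg => s.2 = p)).map Prod.fst
                + Multiset.replicate q 1).sort (· ≤ ·)).reverse)
            ((((N.filter (fun s : Seg => s.1 = 1)).map Prod.snd
                + Multiset.replicate p q).sort (· ≤ ·)))))

/-- Suspension of a multisegment `M ∈ R_n`: each segment is pushed inward
(`[i,j] ↦ [i+1,j+1]`, keeping start `1` at `1` and sending end `n` to `n+2`)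
and the four segments `[1,1]`, `[2,n+2]`, `[1,n+1]`, `[n+2,n+2]` are added;
the suspension of the empty multisegment is `{[1,1],[2,2],[1,2]}`. -/
def suspMS (n : ℕ) (M : Multiset Seg) : Multiset Seg :=
  if n = 0 then {(1, 1), (2, 2), (1, 2)}
  else
    M.map (fun s => (if s.1 = 1 then 1 else s.1 + 1, if s.2 = n then n + 2 else s.2 + 1))
      + {(1, 1), (2, n + 2), (1, n + 1), (n + 2, n + 2)}

open Multiset

theorem wt_add (M N : Multiset Seg) (k : ℕ) : wt (M + N) k = wt M k + wt N k := by
  simp only [wt, filter_add, card_add]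

theorem wt_filter_add_filter_of_iff_not {M : Multiset Seg} {P Q : Seg → Prop}
    [DecidablePred P] [DecidablePred Q] (hQ : ∀ s ∈ M, Q s ↔ ¬ P s) (k : ℕ) :
    wt (M.filter P) k + wt (M.filter Q) k = wt M k := by
  rw [filter_congr hQ, ← wt_add, filter_add_not]

theorem wt_eq_zero_of_forall_snd_lt {M : Multiset Seg} {k : ℕ} (h : ∀ s ∈ M, s.2 < k) :
    wt M k = 0 := by
  rw [wt, card_eq_zero, filter_eq_nil]
  exact fun s hs ⟨_, hks⟩ => (h s hs).not_ge hks

theorem wt_eq_zero_of_forall_lt_fst {M : Multiset Seg} {k : ℕ} (h : ∀ s ∈ M, k < s.1) :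
    wt M k = 0 := by
  rw [wt, card_eq_zero, filter_eq_nil]
  exact fun s hs ⟨hsk, _⟩ => (h s hs).not_ge hsk

theorem wt_eq_countP_map_fst {M : Multiset Seg} {k : ℕ} (h : ∀ s ∈ M, k ≤ s.2) :
    wt M k = (M.map Prod.fst).countP (· ≤ k) := by
  rw [countP_map, wt]
  exact congrArg card (filter_congr fun s hs => and_iff_left (h s hs))

theorem wt_eq_countP_map_snd {M : Multiset Seg} {k : ℕ} (h : ∀ s ∈ M, s.1 ≤ k) :
    wt M k = (M.map Prod.snd).countP (k ≤ ·) := by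
  rw [countP_map, wt]
  exact congrArg card (filter_congr fun s hs => and_iff_right (h s hs))

theorem wt_map_add_add (M : Multiset Seg) (p k : ℕ) :
    wt (M.map fun s => (s.1 + p, s.2 + p)) (k + p) = wt M k := by
  rw [wt, filter_map, card_map, wt]
  exact congrArg card (filter_congr fun s _ => by simp)

section Glue

variable (p q : ℕ) (M N : Multiset Seg)

def gluedStarts : Multiset ℕ :=
  (M.filter (fun s : Seg => s.2 = p)).map Prod.fst + replicate q 1

def gluedEnds : Multiset ℕ :=
  (N.filter (fun s : Seg => s.1 = 1)).map Prod.snd + replicate p q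

def glued : Multiset Seg :=
  ↑(List.map (fun x : ℕ × ℕ => (x.1, x.2 + p))
    (List.zip ((gluedStarts p q M).sort (· ≤ ·)).reverse ((gluedEnds p q N).sort (· ≤ ·))))

theorem concatMS_of_ne_zero {p q : ℕ} (hp : p ≠ 0) (hq : q ≠ 0) :
    concatMS p q M N = M.filter (fun s => s.2 < p)
      + (N.filter (fun s => 1 < s.1)).map (fun s => (s.1 + p, s.2 + p)) + glued p q M N := by
  rw [concatMS, if_neg hp, if_neg hq]
  rfl

theorem map_fst_glued (h : card (gluedStarts p q M) ≤ card (gluedEnds p q N)) :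
    (glued p q M N).map Prod.fst = gluedStarts p q M := by
  have hlen : ((gluedStarts p q M).sort (· ≤ ·)).reverse.length
      ≤ ((gluedEnds p q N).sort (· ≤ ·)).length := by
    simpa only [List.length_reverse, length_sort] using h
  rw [glued, map_coe, List.map_map]
  change (((List.zip _ _).map Prod.fst : List ℕ) : Multiset ℕ) = _
  rw [List.map_fst_zip hlen, coe_reverse, sort_eq]

theorem map_snd_glued (h : card (gluedEnds p q N) ≤ card (gluedStarts p q M)) :
    (glued p q M N).map Prod.snd = (gluedEnds p q N).map (· + p) := by
  have hlen : ((gluedEnds p q N).sort (· ≤ ·)).length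
      ≤ ((gluedStarts p q M).sort (· ≤ ·)).reverse.length := by
    simpa only [List.length_reverse, length_sort] using h
  rw [glued, map_coe, List.map_map]
  change (((List.zip _ _).map ((· + p) ∘ Prod.snd) : List ℕ) : Multiset ℕ) = _
  rw [← List.map_map, List.map_snd_zip hlen, ← map_coe, sort_eq]

theorem exists_of_mem_glued {s : Seg} (hs : s ∈ glued p q M N) :
    ∃ a ∈ gluedStarts p q M, ∃ b ∈ gluedEnds p q N, s = (a, b + p) := by
  obtain ⟨⟨a, b⟩, hab, rfl⟩ := List.mem_map.1 (mem_coe.1 hs)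
  obtain ⟨ha, hb⟩ := List.of_mem_zip hab
  exact ⟨a, by simpa using ha, b, by simpa using hb, rfl⟩

theorem wt_glued_of_le {k : ℕ} (hk : k ≤ p)
    (h : card (gluedStarts p q M) ≤ card (gluedEnds p q N)) :
    wt (glued p q M N) k = (gluedStarts p q M).countP (· ≤ k) := by
  rw [← map_fst_glued p q M N h]
  refine wt_eq_countP_map_fst fun s hs => ?_
  obtain ⟨a, -, b, -, rfl⟩ := exists_of_mem_glued p q M N hs
  exact hk.trans (Nat.le_add_left p b)

theorem wt_glued_add_of_forall_le {k : ℕ} (hstarts : ∀ a ∈ gluedStarts p q M, a ≤ k + p)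
    (h : card (gluedEnds p q N) ≤ card (gluedStarts p q M)) :
    wt (glued p q M N) (k + p) = (gluedEnds p q N).countP (k ≤ ·) := by
  rw [wt_eq_countP_map_snd, map_snd_glued p q M N h, countP_map, countP_eq_card_filter]
  · simp only [Nat.add_le_add_iff_right]
  · intro s hs
    obtain ⟨a, ha, b, -, rfl⟩ := exists_of_mem_glued p q M N hs
    exact hstarts a ha

end Glue

namespace InR

variable {p q : ℕ} {M N : Multiset Seg}

theorem card_filter_snd_eq (hM : InR p M) (hp : p ≠ 0) :
    card (M.filter fun s : Seg => s.2 = p) = p + 1 := by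
  rw [← hM.2 p (Nat.one_le_iff_ne_zero.2 hp) le_rfl, wt]
  refine congrArg card (filter_congr fun s hs => ?_)
  have := hM.1 s hs
  omega

theorem card_filter_fst_eq_one (hN : InR q N) (hq : q ≠ 0) :
    card (N.filter fun s : Seg => s.1 = 1) = q + 1 := by
  rw [← hN.2 1 le_rfl (Nat.one_le_iff_ne_zero.2 hq), wt]
  refine congrArg card (filter_congr fun s hs => ?_)
  have := hN.1 s hs
  omega

theorem card_gluedStarts (hM : InR p M) (hp : p ≠ 0) :
    card (gluedStarts p q M) = p + q + 1 := by
  rw [gluedStarts, card_add, card_map, hM.card_filter_snd_eq hp, card_replicate]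
  omega

theorem card_gluedEnds (hN : InR q N) (hq : q ≠ 0) :
    card (gluedEnds p q N) = p + q + 1 := by
  rw [gluedEnds, card_add, card_map, hN.card_filter_fst_eq_one hq, card_replicate]
  omega

theorem mem_gluedStarts (hM : InR p M) (hp : p ≠ 0) {a : ℕ} (ha : a ∈ gluedStarts p q M) :
    1 ≤ a ∧ a ≤ p := by
  rcases mem_add.1 ha with ha | ha
  · obtain ⟨s, hs, rfl⟩ := mem_map.1 ha
    have := hM.1 s (mem_of_mem_filter hs)
    omega
  · rw [eq_of_mem_replicate ha]
    omega

theorem le_of_mem_gluedEnds (hN : InR q N) {b : ℕ} (hb : b ∈ gluedEnds p q N) : b ≤ q := by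
  rcases mem_add.1 hb with hb | hb
  · obtain ⟨s, hs, rfl⟩ := mem_map.1 hb
    exact (hN.1 s (mem_of_mem_filter hs)).2.2
  · exact (eq_of_mem_replicate hb).le

theorem wt_filter_snd_lt_add_countP_gluedStarts (hM : InR p M) {k : ℕ} (hk1 : 1 ≤ k)
    (hk : k ≤ p) :
    wt (M.filter fun s => s.2 < p) k + (gluedStarts p q M).countP (· ≤ k) = p + q + 1 := by
  have hends : ∀ s ∈ M.filter (fun s : Seg => s.2 = p), k ≤ s.2 := fun s hs =>
    (of_mem_filter hs).symm ▸ hk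
  rw [gluedStarts, countP_add, ← wt_eq_countP_map_fst hends,
    countP_eq_card.2 fun a ha => (eq_of_mem_replicate ha).symm ▸ hk1, card_replicate,
    ← add_assoc, wt_filter_add_filter_of_iff_not (fun s hs => ?_), hM.2 k hk1 hk]
  · omega
  · have := hM.1 s hs
    omega

theorem wt_map_filter_fst_gt_add_countP_gluedEnds (hN : InR q N) {k : ℕ} (hk1 : 1 ≤ k)
    (hk : k ≤ q) :
    wt ((N.filter fun s => 1 < s.1).map fun s => (s.1 + p, s.2 + p)) (k + p)
      + (gluedEnds p q N).countP (k ≤ ·) = p + q + 1 := by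
  have hstarts : ∀ s ∈ N.filter (fun s : Seg => s.1 = 1), s.1 ≤ k := fun s hs =>
    (of_mem_filter hs).symm ▸ hk1
  rw [wt_map_add_add, gluedEnds, countP_add, ← wt_eq_countP_map_snd hstarts,
    countP_eq_card.2 fun b hb => (eq_of_mem_replicate hb).symm ▸ hk, card_replicate,
    ← add_assoc, wt_filter_add_filter_of_iff_not (fun s hs => ?_), hN.2 k hk1 hk]
  · omega
  · have := hN.1 s hs
    omega

theorem concatMS_bounds (hM : InR p M) (hN : InR q N) (hp : p ≠ 0) (hq : q ≠ 0) :
    ∀ s ∈ concatMS p q M N, 1 ≤ s.1 ∧ s.1 ≤ s.2 ∧ s.2 ≤ p + q := by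
  rw [concatMS_of_ne_zero M N hp hq]
  rintro s hs
  rcases mem_add.1 hs with hs | hs
  · rcases mem_add.1 hs with hs | hs
    · have := hM.1 s (mem_of_mem_filter hs)
      omega
    · obtain ⟨t, ht, rfl⟩ := mem_map.1 hs
      have := hN.1 t (mem_of_mem_filter ht)
      dsimp only
      omega
  · obtain ⟨a, ha, b, hb, rfl⟩ := exists_of_mem_glued p q M N hs
    have := hM.mem_gluedStarts hp ha
    have := hN.le_of_mem_gluedEnds hb
    dsimp only
    omega

theorem wt_concatMS (hM : InR p M) (hN : InR q N) (hp : p ≠ 0) (hq : q ≠ 0) {k : ℕ}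
    (hk1 : 1 ≤ k) (hk : k ≤ p + q) : wt (concatMS p q M N) k = p + q + 1 := by
  have hcard : card (gluedStarts p q M) = card (gluedEnds p q N) := by
    rw [hM.card_gluedStarts hp, hN.card_gluedEnds hq]
  rw [concatMS_of_ne_zero M N hp hq, wt_add, wt_add]
  rcases le_or_gt k p with hkp | hpk
  · have hshifted : wt ((N.filter fun s => 1 < s.1).map fun s => (s.1 + p, s.2 + p)) k = 0 := by
      refine wt_eq_zero_of_forall_lt_fst fun s hs => ?_
      obtain ⟨t, ht, rfl⟩ := mem_map.1 hs
      exact hkp.trans_lt (Nat.lt_add_of_pos_left (zero_lt_one.trans (mem_filter.1 ht).2))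
    rw [hshifted, wt_glued_of_le p q M N hkp hcard.le, add_zero,
      hM.wt_filter_snd_lt_add_countP_gluedStarts hk1 hkp]
  · obtain ⟨k, rfl⟩ : ∃ k', k = k' + p := ⟨k - p, by omega⟩
    have hshort : wt (M.filter fun s => s.2 < p) (k + p) = 0 :=
      wt_eq_zero_of_forall_snd_lt fun s hs => (of_mem_filter hs).trans_le (Nat.le_add_left p k)
    have hstarts : ∀ a ∈ gluedStarts p q M, a ≤ k + p := fun a ha =>
      (hM.mem_gluedStarts hp ha).2.trans (Nat.le_add_left p k)
    rw [hshort, wt_glued_add_of_forall_le p q M N hstarts hcard.ge, zero_add,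
      hN.wt_map_filter_fst_gt_add_countP_gluedEnds (by omega) (by omega)]

end InR

/-- the concatenation of a multisegment of weight `(p+1,…,p+1)`
over `[1,p]` with a multisegment of weight `(q+1,…,q+1)` over `[1,q]` is a
well-defined multisegment of weight `(p+q+1,…,p+q+1)` over `[1,p+q]`. -/
theorem concat_mem_R (p q : ℕ) (M N : Multiset Seg)
    (hM : InR p M) (hN : InR q N) :
    InR (p + q) (concatMS p q M N) := by
  rcases eq_or_ne p 0 with rfl | hp
  · simpa [concatMS] using hN
  rcases eq_or_ne q 0 with rfl | hq
  · simpa [concatMS, hp] using hM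
  exact ⟨hM.concatMS_bounds hN hp hq, fun k hk1 hk => hM.wt_concatMS hN hp hq hk1 hk⟩
end
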